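/- arXiv:1910.10666 — 5 statements merged into one kernel-verified Lean document; each statement's English description precedes it below -/
import Mathlib

section
/- If x* and x̃* are both minimizers of f over the consensus subspace C, then G(x, x*) = G(x, x̃*) for every x ∈ ℝ^{m×d}; that is, the Bregman distance G(x, ·) is constant over the solution set. -/
/-- Frobenius inner product on real m×d matrices. -/
noncomputable def ip {m d : ℕ} (x y : Matrix (Fin m) (Fin d) ℝ) : ℝ :=
  ∑ i, ∑ j, x i j * y i j

/-- The consensus subspace C = {1ₘ xᵀ : x ∈ ℝᵈ}. -/
def cC (m d : ℕ) : Set (Matrix (Fin m) (Fin d) ℝ) :=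
  {x | ∃ v : Fin d → ℝ, ∀ i j, x i j = v j}

/-- The Bregman distance G(x, x*) = f(x) − f(x*) − ⟨∇f(x*), x − x*⟩. -/
noncomputable def breg {m d : ℕ} (f : Matrix (Fin m) (Fin d) ℝ → ℝ)
    (gf : Matrix (Fin m) (Fin d) ℝ → Matrix (Fin m) (Fin d) ℝ)
    (x xs : Matrix (Fin m) (Fin d) ℝ) : ℝ :=
  f x - f xs - ip (gf xs) (x - xs)

lemma ip_add {m d : ℕ} (a u w : Matrix (Fin m) (Fin d) ℝ) :
    ip a (u + w) = ip a u + ip a w := by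
  simp [ip, Matrix.add_apply, mul_add, Finset.sum_add_distrib]

lemma ip_sub {m d : ℕ} (a u w : Matrix (Fin m) (Fin d) ℝ) :
    ip a (u - w) = ip a u - ip a w := by
  simp [ip, Matrix.sub_apply, mul_sub, Finset.sum_sub_distrib]

lemma ip_smul {m d : ℕ} (a : Matrix (Fin m) (Fin d) ℝ) (t : ℝ)
    (v : Matrix (Fin m) (Fin d) ℝ) : ip a (t • v) = t * ip a v := by
  simp [ip, Matrix.smul_apply, Finset.mul_sum, smul_eq_mul, mul_left_comm]

/-- Gradient inequality for convex functions. -/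
lemma grad_ineq {m d : ℕ} (f : Matrix (Fin m) (Fin d) ℝ → ℝ)
    (gf : Matrix (Fin m) (Fin d) ℝ → Matrix (Fin m) (Fin d) ℝ)
    (hconv : ConvexOn ℝ Set.univ f)
    (hgrad : ∀ x v : Matrix (Fin m) (Fin d) ℝ,
      HasDerivAt (fun t : ℝ => f (x + t • v)) (ip (gf x) v) 0)
    (x v : Matrix (Fin m) (Fin d) ℝ) :
    f x + ip (gf x) v ≤ f (x + v) := by
  set g : ℝ → ℝ := fun t => f (x + t • v) with hg
  have hd := hgrad x v
  rw [hasDerivAt_iff_tendsto_slope] at hd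
  have h2 : Filter.Tendsto (slope g 0) (nhdsWithin 0 (Set.Ioi 0)) (nhds (ip (gf x) v)) :=
    hd.mono_left (nhdsWithin_mono _ (fun t ht => ne_of_gt ht))
  have hmem : Set.Ioo (0:ℝ) 1 ∈ nhdsWithin (0:ℝ) (Set.Ioi 0) :=
    Ioo_mem_nhdsGT_of_mem ⟨le_refl 0, zero_lt_one⟩
  have hb : ∀ t ∈ Set.Ioo (0:ℝ) 1, slope g 0 t ≤ f (x + v) - f x := by
    intro t ht
    have h01 : (0:ℝ) ≤ 1 - t := by linarith [ht.2]
    have hcomb : x + t • v = (1 - t) • x + t • (x + v) := by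
      rw [smul_add, sub_smul, one_smul]
      abel
    have := hconv.2 (Set.mem_univ x) (Set.mem_univ (x + v)) h01 (le_of_lt ht.1)
      (by ring)
    have hgt : g t ≤ (1 - t) * f x + t * f (x + v) := by
      rw [hg]; simpa [hcomb, smul_eq_mul] using this
    have hg0 : g 0 = f x := by simp [hg]
    rw [slope_def_field]
    rw [hg0]
    rw [div_le_iff₀ (by linarith [ht.1] : (0:ℝ) < t - 0)]
    nlinarith [ht.1]
  have hle : ip (gf x) v ≤ f (x + v) - f x :=
    le_of_tendsto h2 (Filter.eventually_of_mem hmem hb)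
  linarith

/-- If x minimizes f over a set containing the whole line x + t•v, the
directional derivative vanishes. -/
lemma dir_deriv_zero {m d : ℕ} (f : Matrix (Fin m) (Fin d) ℝ → ℝ)
    (gf : Matrix (Fin m) (Fin d) ℝ → Matrix (Fin m) (Fin d) ℝ)
    (hgrad : ∀ x v : Matrix (Fin m) (Fin d) ℝ,
      HasDerivAt (fun t : ℝ => f (x + t • v)) (ip (gf x) v) 0)
    (x v : Matrix (Fin m) (Fin d) ℝ)
    (hmin : ∀ t : ℝ, f x ≤ f (x + t • v)) :
    ip (gf x) v = 0 := by
  have hloc : IsLocalMin (fun t : ℝ => f (x + t • v)) 0 := by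
    apply Filter.Eventually.of_forall
    intro t
    simpa using hmin t
  exact hloc.hasDerivAt_eq_zero (hgrad x v)

/-- If x* and x̃* are both minimizers of f over C, then
G(x, x*) = G(x, x̃*) for every x. -/
theorem stmt_1 {m d : ℕ} (f : Matrix (Fin m) (Fin d) ℝ → ℝ)
    (gf : Matrix (Fin m) (Fin d) ℝ → Matrix (Fin m) (Fin d) ℝ)
    (hconv : ConvexOn ℝ Set.univ f)
    (hgrad : ∀ x v : Matrix (Fin m) (Fin d) ℝ,
      HasDerivAt (fun t : ℝ => f (x + t • v)) (ip (gf x) v) 0)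
    (xs xt : Matrix (Fin m) (Fin d) ℝ)
    (hxsC : xs ∈ cC m d) (hxsMin : ∀ x ∈ cC m d, f xs ≤ f x)
    (hxtC : xt ∈ cC m d) (hxtMin : ∀ x ∈ cC m d, f xt ≤ f x) :
    ∀ x : Matrix (Fin m) (Fin d) ℝ, breg f gf x xs = breg f gf x xt := by
  obtain ⟨vs, hvs⟩ := hxsC
  obtain ⟨vt, hvt⟩ := hxtC
  -- equal minimal values
  have hfeq : f xs = f xt :=
    le_antisymm (hxsMin xt ⟨vt, hvt⟩) (hxtMin xs ⟨vs, hvs⟩)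
  -- the line through xs and xt stays in C
  have hlineS : ∀ t : ℝ, xs + t • (xt - xs) ∈ cC m d := by
    intro t
    refine ⟨fun j => vs j + t * (vt j - vs j), fun i j => ?_⟩
    simp [Matrix.add_apply, Matrix.smul_apply, Matrix.sub_apply, hvs i j, hvt i j]
  have hlineT : ∀ t : ℝ, xt + t • (xs - xt) ∈ cC m d := by
    intro t
    refine ⟨fun j => vt j + t * (vs j - vt j), fun i j => ?_⟩
    simp [Matrix.add_apply, Matrix.smul_apply, Matrix.sub_apply, hvs i j, hvt i j]
  have hst : ip (gf xs) (xt - xs) = 0 :=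
    dir_deriv_zero f gf hgrad xs (xt - xs) (fun t => hxsMin _ (hlineS t))
  have hts : ip (gf xt) (xs - xt) = 0 :=
    dir_deriv_zero f gf hgrad xt (xs - xt) (fun t => hxtMin _ (hlineT t))
  -- gf xs acts like gf xt on every direction
  have hkey : ∀ v : Matrix (Fin m) (Fin d) ℝ, ip (gf xt) v = ip (gf xs) v := by
    intro v
    set c := ip (gf xs) v with hc
    -- g t := f (xt + t • v) satisfies g t ≥ g 0 + t * c
    have hlow : ∀ t : ℝ, f xt + t * c ≤ f (xt + t • v) := by
      intro t
      have h1 := grad_ineq f gf hconv hgrad xs (xt + t • v - xs)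
      have h2 : ip (gf xs) (xt + t • v - xs) = t * c := by
        have : xt + t • v - xs = (xt - xs) + t • v := by abel
        rw [this, ip_add, hst, ip_smul, hc]
        ring
      have h3 : xs + (xt + t • v - xs) = xt + t • v := by abel
      rw [h2, h3] at h1
      linarith [hfeq ▸ h1]
    have hloc : IsLocalMin (fun t : ℝ => f (xt + t • v) - t * c) 0 := by
      apply Filter.Eventually.of_forall
      intro t
      have := hlow t
      simp only
      have h0 : f (xt + (0:ℝ) • v) - (0:ℝ) * c = f xt := by simp
      rw [h0]
      linarith
    have hder : HasDerivAt (fun t : ℝ => f (xt + t • v) - t * c)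
        (ip (gf xt) v - c) 0 := (hgrad xt v).sub (hasDerivAt_mul_const c)
    have := hloc.hasDerivAt_eq_zero hder
    linarith [this]
  intro x
  have hx : ip (gf xs) (x - xs) = ip (gf xt) (x - xt) := by
    have h1 : x - xs = (x - xt) + (xt - xs) := by abel
    have h2 : xt - xs = -(xs - xt) := by abel
    calc ip (gf xs) (x - xs) = ip (gf xs) (x - xt) + ip (gf xs) (xt - xs) := by
          rw [h1, ip_add]
      _ = ip (gf xt) (x - xt) + ip (gf xs) (xt - xs) := by rw [hkey]
      _ = ip (gf xt) (x - xt) := by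
          have : ip (gf xs) (xt - xs) = -ip (gf xs) (xs - xt) := by
            rw [h2, show -(xs - xt) = (0:Matrix (Fin m) (Fin d) ℝ) - (xs - xt) by abel,
              ip_sub]
            simp [ip]
          rw [this, ← hkey, hts]
          ring
  simp [breg, hfeq, hx]
end

section
/- If x* and x̃* are both minimizers of f over the consensus subspace C, then ∇f(x*) = ∇f(x̃*). -/
lemma ip_sub_left {m d : ℕ} (x y z : Matrix (Fin m) (Fin d) ℝ) :
    ip (x - y) z = ip x z - ip y z := by
  simp [ip, sub_mul, Finset.sum_sub_distrib]

lemma ip_add_smul_right {m d : ℕ} (g x u : Matrix (Fin m) (Fin d) ℝ) (t : ℝ) :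
    ip g (x + t • u) = ip g x + t * ip g u := by
  simp [ip, Matrix.add_apply, Matrix.smul_apply, mul_add, Finset.sum_add_distrib,
    Finset.mul_sum, smul_eq_mul, mul_left_comm]

lemma convexOn_line {E : Type*} [AddCommGroup E] [Module ℝ E] {f : E → ℝ}
    (hf : ConvexOn ℝ Set.univ f) (x v : E) :
    ConvexOn ℝ Set.univ (fun t : ℝ => f (x + t • v)) := by
  refine ⟨convex_univ, fun s _ t _ a b ha hb hab => ?_⟩
  have hx : a • (x + s • v) + b • (x + t • v) = (a + b) • x + (a * s + b * t) • v := by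
    module
  rw [hab, one_smul] at hx
  simp only [smul_eq_mul]
  rw [← hx]
  exact hf.2 (Set.mem_univ _) (Set.mem_univ _) ha hb hab

/-- Right derivative at 0 of a convex function is at most the slope to 1. -/
lemma deriv_le_slope_of_convex {φ : ℝ → ℝ} (hφ : ConvexOn ℝ Set.univ φ) {a : ℝ}
    (h : HasDerivAt φ a 0) : a ≤ φ 1 - φ 0 := by
  rw [hasDerivAt_iff_tendsto_slope] at h
  have h' : Filter.Tendsto (slope φ 0) (nhdsWithin 0 (Set.Ioi 0)) (nhds a) :=
    h.mono_left (nhdsWithin_mono 0 (fun x hx => ne_of_gt hx))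
  refine le_of_tendsto h' ?_
  filter_upwards [Ioo_mem_nhdsGT_of_mem (by norm_num : (0:ℝ) ∈ Set.Ico 0 1)] with t ht
  have := hφ.secant_mono (Set.mem_univ (0:ℝ)) (Set.mem_univ t) (Set.mem_univ (1:ℝ))
    (ne_of_gt ht.1) one_ne_zero (le_of_lt ht.2)
  simpa [slope_def_field, div_eq_iff] using this

/-- If a function is constant on [0,1] then its derivative at 0 is 0. -/
lemma deriv_eq_zero_of_const {φ : ℝ → ℝ} (hc : ∀ t ∈ Set.Icc (0:ℝ) 1, φ t = φ 0) {a : ℝ}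
    (h : HasDerivAt φ a 0) : a = 0 := by
  rw [hasDerivAt_iff_tendsto_slope] at h
  have h' : Filter.Tendsto (slope φ 0) (nhdsWithin 0 (Set.Ioi 0)) (nhds a) :=
    h.mono_left (nhdsWithin_mono 0 (fun x hx => ne_of_gt hx))
  have h0 : ∀ᶠ t in nhdsWithin (0:ℝ) (Set.Ioi 0), slope φ 0 t = 0 := by
    filter_upwards [Ioo_mem_nhdsGT_of_mem (by norm_num : (0:ℝ) ∈ Set.Ico 0 1)] with t ht
    rw [slope_def_field, hc t ⟨le_of_lt ht.1, le_of_lt ht.2⟩, sub_self, zero_div]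
  have h'' : Filter.Tendsto (slope φ 0) (nhdsWithin 0 (Set.Ioi 0)) (nhds 0) :=
    Filter.Tendsto.congr' (Filter.EventuallyEq.symm h0) tendsto_const_nhds
  exact tendsto_nhds_unique h' h''

/-- If x* and x̃* are both minimizers of f over C, then
∇f(x*) = ∇f(x̃*). -/
theorem stmt_2 {m d : ℕ} (f : Matrix (Fin m) (Fin d) ℝ → ℝ)
    (gf : Matrix (Fin m) (Fin d) ℝ → Matrix (Fin m) (Fin d) ℝ)
    (hconv : ConvexOn ℝ Set.univ f)
    (hgrad : ∀ x v : Matrix (Fin m) (Fin d) ℝ,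
      HasDerivAt (fun t : ℝ => f (x + t • v)) (ip (gf x) v) 0)
    (xs xt : Matrix (Fin m) (Fin d) ℝ)
    (hxsC : xs ∈ cC m d) (hxsMin : ∀ x ∈ cC m d, f xs ≤ f x)
    (hxtC : xt ∈ cC m d) (hxtMin : ∀ x ∈ cC m d, f xt ≤ f x) :
    gf xs = gf xt := by
  -- gradient inequality
  have gradineq : ∀ x v : Matrix (Fin m) (Fin d) ℝ, f x + ip (gf x) v ≤ f (x + v) := by
    intro x v
    have h := deriv_le_slope_of_convex (convexOn_line hconv x v) (hgrad x v)
    simp only [zero_smul, add_zero, one_smul] at h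
    linarith
  -- f xs = f xt
  have feq : f xs = f xt := le_antisymm (hxsMin xt hxtC) (hxtMin xs hxsC)
  -- the segment from xs to xt is constant
  have hconst : ∀ t ∈ Set.Icc (0:ℝ) 1, f (xs + t • (xt - xs)) = f xs := by
    intro t ht
    obtain ⟨va, hva⟩ := hxsC
    obtain ⟨vb, hvb⟩ := hxtC
    have hmem : xs + t • (xt - xs) ∈ cC m d := by
      refine ⟨fun j => va j + t * (vb j - va j), fun i j => ?_⟩
      simp [Matrix.add_apply, Matrix.smul_apply, Matrix.sub_apply, hva i j, hvb i j]
    have hle : f (xs + t • (xt - xs)) ≤ f xs := by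
      have hpt : xs + t • (xt - xs) = (1 - t) • xs + t • xt := by module
      have := hconv.2 (Set.mem_univ xs) (Set.mem_univ xt)
        (by linarith [ht.2] : (0:ℝ) ≤ 1 - t) ht.1 (by ring)
      rw [hpt]
      calc f ((1 - t) • xs + t • xt) ≤ (1 - t) * f xs + t * f xt := by simpa using this
        _ = f xs := by rw [← feq]; ring
    exact le_antisymm hle (hxsMin _ hmem)
  -- directional derivative of f at xs along xt - xs is 0
  have hvs : ip (gf xs) (xt - xs) = 0 := by
    refine deriv_eq_zero_of_const (φ := fun t : ℝ => f (xs + t • (xt - xs))) ?_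
      (hgrad xs (xt - xs))
    intro t ht
    simp only [hconst t ht]
    simp
  -- xt is a global minimizer of z ↦ f z - ip (gf xs) z
  have hmin : ∀ z : Matrix (Fin m) (Fin d) ℝ,
      f xt - ip (gf xs) xt ≤ f z - ip (gf xs) z := by
    intro z
    have h1 := gradineq xs (z - xs)
    have h2 : ip (gf xs) z - ip (gf xs) xs = ip (gf xs) (z - xs) := by
      have := ip_add_smul_right (gf xs) xs (z - xs) 1
      simp at this
      linarith [this]
    have h3 : ip (gf xs) xt - ip (gf xs) xs = 0 := by
      have := ip_add_smul_right (gf xs) xs (xt - xs) 1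
      simp at this
      linarith [this, hvs]
    have h4 : f xs ≤ f z - ip (gf xs) (z - xs) := by
      have : xs + (z - xs) = z := by abel
      rw [this] at h1; linarith
    linarith [h4, h2, feq, h3]
  -- hence derivative of perturbed function at xt in any direction is 0
  have key : ∀ u : Matrix (Fin m) (Fin d) ℝ, ip (gf xt) u = ip (gf xs) u := by
    intro u
    have hψ : HasDerivAt (fun t : ℝ => f (xt + t • u) - ip (gf xs) (xt + t • u))
        (ip (gf xt) u - ip (gf xs) u) 0 := by
      have h2 : HasDerivAt (fun t : ℝ => ip (gf xs) (xt + t • u)) (ip (gf xs) u) 0 := by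
        have heq : (fun t : ℝ => ip (gf xs) (xt + t • u))
            = fun t : ℝ => ip (gf xs) xt + t * ip (gf xs) u :=
          funext fun t => ip_add_smul_right _ _ _ _
        rw [heq]
        simpa using ((hasDerivAt_id (0:ℝ)).mul_const (ip (gf xs) u)).const_add (ip (gf xs) xt)
      exact (hgrad xt u).sub h2
    have hlm : IsLocalMin (fun t : ℝ => f (xt + t • u) - ip (gf xs) (xt + t • u)) 0 := by
      refine Filter.Eventually.of_forall fun t => ?_
      simpa using hmin (xt + t • u)
    have := hlm.hasDerivAt_eq_zero hψ
    linarith [this]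
  -- conclude gradients are equal
  have hzero : ip (gf xt - gf xs) (gf xt - gf xs) = 0 := by
    rw [ip_sub_left, key, sub_self]
  set u := gf xt - gf xs with hu
  have hentries : ∀ i j, u i j = 0 := by
    intro i j
    have hnn : ∀ i' ∈ (Finset.univ : Finset (Fin m)),
        (0:ℝ) ≤ ∑ j', u i' j' * u i' j' :=
      fun i' _ => Finset.sum_nonneg fun j' _ => mul_self_nonneg _
    have hrow := (Finset.sum_eq_zero_iff_of_nonneg hnn).mp hzero i (Finset.mem_univ i)
    have hnn2 : ∀ j' ∈ (Finset.univ : Finset (Fin d)), (0:ℝ) ≤ u i j' * u i j' :=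
      fun j' _ => mul_self_nonneg _
    have := (Finset.sum_eq_zero_iff_of_nonneg hnn2).mp hrow j (Finset.mem_univ j)
    exact mul_self_eq_zero.mp this
  ext i j
  have := hentries i j
  simp only [hu, Matrix.sub_apply] at this
  linarith
end

section
/- For all integers 1 ≤ j ≤ k ≤ d, the infimum of f_{[k]}(x₁, x₂) over all x₁, x₂ ∈ ℝ^{j,d} equals −(L/8)·(k²/(k+1)² + j/(k+1)²), and this infimum is attained. -/
open Matrix

/-- The matrix A_{1,[k]} (1-based indices in the paper; here 0-based `Fin d`). -/
def A1 (d k : ℕ) : Matrix (Fin d) (Fin d) ℝ := fun i j =>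
  if i = j then (if (i : ℕ) + 1 ≤ k then 1 else 0)
  else if ((i : ℕ) + 1 = (j : ℕ) ∧ Even ((i : ℕ) + 1) ∧ (j : ℕ) + 1 ≤ k) ∨
          ((j : ℕ) + 1 = (i : ℕ) ∧ Even ((j : ℕ) + 1) ∧ (i : ℕ) + 1 ≤ k) then -1
  else 0

/-- The matrix A_{2,[k]}. -/
def A2 (d k : ℕ) : Matrix (Fin d) (Fin d) ℝ := fun i j =>
  if i = j then (if (i : ℕ) + 1 ≤ k then 1 else 0)
  else if ((i : ℕ) + 1 = (j : ℕ) ∧ Odd ((i : ℕ) + 1) ∧ (j : ℕ) + 1 ≤ k) ∨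
          ((j : ℕ) + 1 = (i : ℕ) ∧ Odd ((j : ℕ) + 1) ∧ (i : ℕ) + 1 ≤ k) then -1
  else 0

/-- a_{[k]} = Σ_{i=1}^k (−1)^{i+1} e_i (1-based), i.e. entries alternate
1, −1, …, with k nonzeros. -/
def avec (d k : ℕ) : Fin d → ℝ := fun i =>
  if (i : ℕ) < k then (-1) ^ (i : ℕ) else 0

/-- The first canonical basis vector e₁ of ℝ^d. -/
def e1 (d : ℕ) : Fin d → ℝ := fun i => if (i : ℕ) = 0 then 1 else 0

/-- ℝ^{j,d} = span{e₁, …, e_j}. -/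
def Rj (d j : ℕ) : Set (Fin d → ℝ) :=
  {x | ∀ i : Fin d, j ≤ (i : ℕ) → x i = 0}

/-- fₖ(x₁, x₂) = (L/8)x₁ᵀA₁x₁ − (L/4)e₁ᵀx₁ + (L/8)x₂ᵀA₂x₂
    + (L/(4(k+1)))⟨a_{[k]}, x₁ − x₂⟩. -/
noncomputable def fk (d : ℕ) (L : ℝ) (k : ℕ) (x1 x2 : Fin d → ℝ) : ℝ :=
  L / 8 * (x1 ⬝ᵥ (A1 d k).mulVec x1) - L / 4 * (e1 d ⬝ᵥ x1)
    + L / 8 * (x2 ⬝ᵥ (A2 d k).mulVec x2)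
    + L / (4 * ((k : ℝ) + 1)) * (avec d k ⬝ᵥ (x1 - x2))

/-!
On `ℝ^{j,d}` with `j ≤ k` the quadratic forms of `A_{1,[k]}` and `A_{2,[k]}` only couple the
consecutive coordinates `(n, n + 1)` with `n` odd, resp. even (0-based), and a telescoping sum
absorbs the linear terms into these pairs. Hence `f_{[k]}` is the claimed value plus `L / 8` times
`(x₁ 0 - k / (k + 1))²` and the squares `(x n - x (n + 1) - 1 / (k + 1))²` over the pairs of `x₁`
and of `x₂`; as `j ≥ 1`, these squares vanish simultaneously at an explicit point.
-/

open Finset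

section NatExtend

variable {α : Type*} [Zero α] {d : ℕ}

def natExtend (x : Fin d → α) (n : ℕ) : α := if h : n < d then x ⟨n, h⟩ else 0

@[simp] theorem natExtend_coe (x : Fin d → α) (i : Fin d) : natExtend x i = x i := by
  simp [natExtend]

theorem natExtend_eq_zero_of_mem_Rj {j n : ℕ} {x : Fin d → ℝ} (hx : x ∈ Rj d j) (hn : j ≤ n) :
    natExtend x n = 0 := by
  unfold natExtend
  split_ifs
  exacts [hx _ hn, rfl]

end NatExtend

theorem Fin.sum_univ_eq_sum_range_of_eq_zero {M : Type*} [AddCommMonoid M] {d j : ℕ}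
    (hjd : j ≤ d) {g : ℕ → M} (hg : ∀ n ≥ j, g n = 0) :
    ∑ i : Fin d, g i = ∑ n ∈ range j, g n := by
  rw [Fin.sum_univ_eq_sum_range g d, eventually_constant_sum hg hjd]

theorem sum_range_complete_square {w y : ℕ → ℝ} (c : ℝ) {N : ℕ}
    (hw : ∀ n, w (n + 1) = 1 - w n) (hy : y N = 0) :
    ∑ n ∈ range N, (y n ^ 2 - 2 * w n * y n * y (n + 1))
        + 2 * c * ∑ n ∈ range N, (1 - 2 * w n) * y n
      = (1 - w 0) * (y 0 ^ 2 + 2 * c * y 0)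
        + ∑ n ∈ range N, w n * (y n - y (n + 1) - c) ^ 2 - c ^ 2 * ∑ n ∈ range N, w n := by
  set T : ℕ → ℝ := fun n => (1 - w n) * (y n ^ 2 + 2 * c * y n)
  calc _ = ∑ n ∈ range N,
          ((T n - T (n + 1)) + (w n * (y n - y (n + 1) - c) ^ 2 - c ^ 2 * w n)) := by
        rw [mul_sum, ← sum_add_distrib]
        exact sum_congr rfl fun n _ => by simp only [T, hw]; ring
    _ = _ := by
        rw [sum_add_distrib, sum_range_sub', sum_sub_distrib, mul_sum]
        simp only [T, hy]
        ring

theorem sum_range_sum_range_tridiag (p : ℕ → Prop) [DecidablePred p] {j : ℕ} {y : ℕ → ℝ}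
    (hy : y j = 0) :
    ∑ n ∈ range j, ∑ m ∈ range j, y n * ((if m = n then 1 else 0)
      - (if m = n + 1 ∧ p n then 1 else 0) - (if n = m + 1 ∧ p m then 1 else 0)) * y m
    = ∑ n ∈ range j, (y n ^ 2 - 2 * (if p n then 1 else 0) * y n * y (n + 1)) := by
  have hdiag : ∀ n ∈ range j, ∑ m ∈ range j, y n * (if m = n then 1 else 0) * y m = y n ^ 2 :=
    fun n hn => by simp [hn, sq]
  have hupper : ∀ n ∈ range j, ∑ m ∈ range j, y n * (if m = n + 1 ∧ p n then 1 else 0) * y m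
      = (if p n then 1 else 0) * y n * y (n + 1) := by
    intro n hn
    obtain h | h : n + 1 < j ∨ n + 1 = j := by simp at hn; omega
    · simp [ite_and, h]
    · simp [ite_and, h, hy]
  have hlower : ∑ n ∈ range j, ∑ m ∈ range j, y n * (if n = m + 1 ∧ p m then 1 else 0) * y m
      = ∑ n ∈ range j, ∑ m ∈ range j, y n * (if m = n + 1 ∧ p n then 1 else 0) * y m := by
    rw [sum_comm]
    exact sum_congr rfl fun n _ => sum_congr rfl fun m _ => by ring
  simp only [mul_sub, sub_mul, sum_sub_distrib, hlower, sum_congr rfl hdiag, sum_congr rfl hupper]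
  simp only [mul_assoc, ← mul_sum]
  ring

theorem dotProduct_mulVec_eq_of_tridiag (p : ℕ → Prop) [DecidablePred p] {d j : ℕ} (hjd : j ≤ d)
    {A : Matrix (Fin d) (Fin d) ℝ} (hA : ∀ i m : Fin d, (i : ℕ) < j → (m : ℕ) < j →
      A i m = (if (m : ℕ) = i then 1 else 0) - (if (m : ℕ) = i + 1 ∧ p i then 1 else 0)
        - (if (i : ℕ) = m + 1 ∧ p m then 1 else 0))
    {x : Fin d → ℝ} (hx : x ∈ Rj d j) :
    x ⬝ᵥ A *ᵥ x = ∑ n ∈ range j,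
      (natExtend x n ^ 2 - 2 * (if p n then 1 else 0) * natExtend x n * natExtend x (n + 1)) := by
  set y := natExtend x
  have hy : ∀ n ≥ j, y n = 0 := fun n hn => natExtend_eq_zero_of_mem_Rj hx hn
  set G : ℕ → ℕ → ℝ := fun n m => y n * ((if m = n then 1 else 0)
      - (if m = n + 1 ∧ p n then 1 else 0) - (if n = m + 1 ∧ p m then 1 else 0)) * y m
  have hG : ∀ i m : Fin d, x i * (A i m * x m) = G i m := by
    intro i m
    by_cases hi : (i : ℕ) < j
    · by_cases hm : (m : ℕ) < j
      · simp [G, y, hA i m hi hm, mul_assoc]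
      · simp [G, y, hx m (not_lt.1 hm)]
    · simp [G, y, hx i (not_lt.1 hi)]
  rw [← sum_range_sum_range_tridiag p (hy j le_rfl)]
  simp only [dotProduct, mulVec, mul_sum, hG]
  have hGj : ∀ n m, j ≤ n ∨ j ≤ m → G n m = 0 := by
    rintro n m (hn | hm) <;> simp [G, hy _ ‹_›]
  rw [sum_congr rfl fun (i : Fin d) _ => Fin.sum_univ_eq_sum_range_of_eq_zero hjd (g := G i)
    fun m hm => hGj i m (.inr hm)]
  exact Fin.sum_univ_eq_sum_range_of_eq_zero hjd (g := fun n => ∑ m ∈ range j, G n m)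
    fun n hn => sum_eq_zero fun m _ => hGj n m (.inl hn)

theorem A1_apply_of_lt {d k : ℕ} {i m : Fin d} (hi : (i : ℕ) < k) (hm : (m : ℕ) < k) :
    A1 d k i m = (if (m : ℕ) = i then 1 else 0) - (if (m : ℕ) = i + 1 ∧ Odd (i : ℕ) then 1 else 0)
      - (if (i : ℕ) = m + 1 ∧ Odd (m : ℕ) then 1 else 0) := by
  simp only [A1, Fin.ext_iff, Nat.odd_iff, Nat.even_iff]
  split_ifs <;> first | omega | norm_num

theorem A2_apply_of_lt {d k : ℕ} {i m : Fin d} (hi : (i : ℕ) < k) (hm : (m : ℕ) < k) :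
    A2 d k i m = (if (m : ℕ) = i then 1 else 0) - (if (m : ℕ) = i + 1 ∧ Even (i : ℕ) then 1 else 0)
      - (if (i : ℕ) = m + 1 ∧ Even (m : ℕ) then 1 else 0) := by
  simp only [A2, Fin.ext_iff, Nat.odd_iff, Nat.even_iff]
  split_ifs <;> first | omega | norm_num

theorem e1_dotProduct {d : ℕ} (x : Fin d → ℝ) : e1 d ⬝ᵥ x = natExtend x 0 := by
  simp only [dotProduct, e1, ite_mul, one_mul, zero_mul, ← natExtend_coe x]
  rw [Fin.sum_univ_eq_sum_range (fun n => if n = 0 then natExtend x n else 0), sum_ite_eq']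
  split_ifs with h
  · rfl
  · simp [natExtend, show ¬ 0 < d by simpa using h]

theorem avec_dotProduct {d j k : ℕ} (hjk : j ≤ k) (hjd : j ≤ d) {x : Fin d → ℝ}
    (hx : x ∈ Rj d j) : avec d k ⬝ᵥ x = ∑ n ∈ range j, (-1) ^ n * natExtend x n := by
  simp only [dotProduct, avec, ← natExtend_coe x]
  rw [Fin.sum_univ_eq_sum_range_of_eq_zero hjd
    (g := fun n => (if n < k then (-1) ^ n else 0) * natExtend x n)
    fun n hn => by simp [natExtend_eq_zero_of_mem_Rj hx hn]]
  exact sum_congr rfl fun n hn => by simp [(mem_range.1 hn).trans_le hjk]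

section Parity

variable {R : Type*} [Ring R]

theorem ite_odd_add_one (n : ℕ) :
    (if Odd (n + 1) then 1 else 0 : R) = 1 - if Odd n then 1 else 0 := by
  by_cases h : Odd n <;> simp [h, Nat.odd_add_one]

theorem ite_even_add_one (n : ℕ) :
    (if Even (n + 1) then 1 else 0 : R) = 1 - if Even n then 1 else 0 := by
  by_cases h : Even n <;> simp [h, Nat.even_add_one]

theorem ite_odd_add_ite_even (n : ℕ) :
    (if Odd n then 1 else 0 : R) + (if Even n then 1 else 0) = 1 := by
  rcases Nat.even_or_odd n with h | h
  · simp [h, Nat.not_odd_iff_even.2 h]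
  · simp [h, Nat.not_even_iff_odd.2 h]

theorem one_sub_two_mul_ite_odd (n : ℕ) : (1 - 2 * (if Odd n then 1 else 0) : R) = (-1) ^ n := by
  rcases Nat.even_or_odd n with h | h
  · simp [h.neg_one_pow, Nat.not_odd_iff_even.2 h]
  · simp [h.neg_one_pow, h]; norm_num

theorem one_sub_two_mul_ite_even (n : ℕ) :
    (1 - 2 * (if Even n then 1 else 0) : R) = -(-1) ^ n := by
  rcases Nat.even_or_odd n with h | h
  · simp [h.neg_one_pow, h]; norm_num
  · simp [h.neg_one_pow, Nat.not_even_iff_odd.2 h]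

end Parity

theorem fk_eq_of_mem_Rj {d j k : ℕ} (L : ℝ) (hjk : j ≤ k) (hjd : j ≤ d) {x1 x2 : Fin d → ℝ}
    (hx1 : x1 ∈ Rj d j) (hx2 : x2 ∈ Rj d j) :
    fk d L k x1 x2 = -(L / 8) * ((k : ℝ) ^ 2 / ((k : ℝ) + 1) ^ 2 + (j : ℝ) / ((k : ℝ) + 1) ^ 2)
      + L / 8 * ((natExtend x1 0 - k / (k + 1)) ^ 2
        + ∑ n ∈ range j, (if Odd n then 1 else 0)
            * (natExtend x1 n - natExtend x1 (n + 1) - 1 / (k + 1)) ^ 2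
        + ∑ n ∈ range j, (if Even n then 1 else 0)
            * (natExtend x2 n - natExtend x2 (n + 1) - 1 / (k + 1)) ^ 2) := by
  set c : ℝ := 1 / (k + 1)
  have hsq1 := sum_range_complete_square (w := fun n => if Odd n then 1 else 0) c ite_odd_add_one
    (natExtend_eq_zero_of_mem_Rj hx1 le_rfl)
  have hsq2 := sum_range_complete_square (w := fun n => if Even n then 1 else 0) c ite_even_add_one
    (natExtend_eq_zero_of_mem_Rj hx2 le_rfl)
  simp only [one_sub_two_mul_ite_odd, one_sub_two_mul_ite_even, neg_mul, sum_neg_distrib,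
    Nat.not_odd_zero, Even.zero, if_true, if_false] at hsq1 hsq2
  have hcount : ∑ n ∈ range j, (if Odd n then 1 else 0 : ℝ)
      + ∑ n ∈ range j, (if Even n then 1 else 0 : ℝ) = j := by
    rw [← sum_add_distrib, sum_congr rfl fun n _ => ite_odd_add_ite_even n]
    simp
  have hk : (k : ℝ) / (k + 1) = 1 - c := by simp only [c]; field_simp; ring
  have hk2 : (k : ℝ) ^ 2 / (k + 1) ^ 2 = (1 - c) ^ 2 := by rw [← hk, div_pow]
  have hj : (j : ℝ) / (k + 1) ^ 2 = j * c ^ 2 := by simp only [c]; field_simp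
  have hL : L / (4 * (k + 1)) = L / 4 * c := by simp only [c]; field_simp
  rw [fk, dotProduct_mulVec_eq_of_tridiag Odd hjd
      (fun i m hi hm => A1_apply_of_lt (hi.trans_le hjk) (hm.trans_le hjk)) hx1,
    dotProduct_mulVec_eq_of_tridiag Even hjd
      (fun i m hi hm => A2_apply_of_lt (hi.trans_le hjk) (hm.trans_le hjk)) hx2,
    e1_dotProduct, dotProduct_sub, avec_dotProduct hjk hjd hx1, avec_dotProduct hjk hjd hx2,
    hk, hk2, hj, hL]
  linear_combination (L / 8) * (hsq1 + hsq2) - L / 8 * c ^ 2 * hcount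

def truncate (d j : ℕ) (g : ℕ → ℝ) : Fin d → ℝ := fun i => if (i : ℕ) < j then g i else 0

theorem truncate_mem_Rj (d j : ℕ) (g : ℕ → ℝ) : truncate d j g ∈ Rj d j :=
  fun _ hi => if_neg (not_lt.2 hi)

theorem natExtend_truncate {d j : ℕ} (hjd : j ≤ d) (g : ℕ → ℝ) (n : ℕ) :
    natExtend (truncate d j g) n = if n < j then g n else 0 := by
  unfold natExtend truncate
  split_ifs <;> first | rfl | omega

theorem fk_truncate_eq {d j k : ℕ} (L : ℝ) (hj : 1 ≤ j) (hjk : j ≤ k) (hjd : j ≤ d) :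
    fk d L k (truncate d j fun n => if Odd n then 1 / (k + 1) else if n = 0 then k / (k + 1) else 0)
        (truncate d j fun n => if Even n then 1 / (k + 1) else 0)
      = -(L / 8) * ((k : ℝ) ^ 2 / ((k : ℝ) + 1) ^ 2 + (j : ℝ) / ((k : ℝ) + 1) ^ 2) := by
  rw [fk_eq_of_mem_Rj L hjk hjd (truncate_mem_Rj _ _ _) (truncate_mem_Rj _ _ _),
    add_eq_left, mul_eq_zero]
  right
  simp only [natExtend_truncate hjd]
  rw [sum_eq_zero fun n hn => ?_, sum_eq_zero fun n hn => ?_]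
  · simp [show 0 < j from hj]
  all_goals
    rw [mem_range] at hn
    rcases Nat.even_or_odd n with h | h
  all_goals
    simp [hn, h, Nat.not_even_iff_odd, Nat.not_odd_iff_even, Nat.even_add_one, Nat.odd_add_one]

/-- the minimum of f_{[k]} over ℝ^{j,d} × ℝ^{j,d} is attained
and equals −(L/8)(k²/(k+1)² + j/(k+1)²). -/
theorem stmt_6 (d : ℕ) (L : ℝ) (hL : 0 < L) (j k : ℕ)
    (hj : 1 ≤ j) (hjk : j ≤ k) (hkd : k ≤ d) :
    IsLeast {v : ℝ | ∃ x1 ∈ Rj d j, ∃ x2 ∈ Rj d j, v = fk d L k x1 x2}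
      (-(L / 8) * ((k : ℝ) ^ 2 / ((k : ℝ) + 1) ^ 2 + (j : ℝ) / ((k : ℝ) + 1) ^ 2)) := by
  have hjd : j ≤ d := hjk.trans hkd
  refine ⟨⟨_, truncate_mem_Rj _ _ _, _, truncate_mem_Rj _ _ _,
    (fk_truncate_eq L hj hjk hjd).symm⟩, ?_⟩
  rintro v ⟨x1, hx1, x2, hx2, rfl⟩
  rw [fk_eq_of_mem_Rj L hjk hjd hx1 hx2]
  exact le_add_of_nonneg_right (by positivity)
end

section
/- For every integer k ≥ 1 with 2k + 1 ≤ d and every x₁, x₂ ∈ ℝ^{k,d}, one has f_{[2k+1]}(x₁, x₂) ≥ −(L/8)·(2k+1)/(2k+2) + L/(32(k+1)). (The constant −(L/8)·(2k+1)/(2k+2) is the global minimum value of f_{[2k+1]}, so any point whose two components lie in the truncated subspace ℝ^{k,d} is at least L/(32(k+1)) above optimality.) -/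
open Matrix

/-! ### Auxiliary machinery -/

open Finset

/-- ℕ-indexed zero-padded version of a vector. -/
def pad (d : ℕ) (x : Fin d → ℝ) : ℕ → ℝ := fun n => if h : n < d then x ⟨n, h⟩ else 0

lemma pad_apply (d : ℕ) (x : Fin d → ℝ) (i : Fin d) : pad d x (i : ℕ) = x i := by
  simp [pad]

lemma pad_supp (d k : ℕ) (x : Fin d → ℝ) (hx : x ∈ Rj d k) :
    ∀ n, k ≤ n → pad d x n = 0 := by
  intro n hn
  unfold pad
  split
  · exact hx _ hn
  · rfl

lemma pad_sub (d : ℕ) (x y : Fin d → ℝ) (n : ℕ) :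
    pad d (x - y) n = pad d x n - pad d y n := by
  unfold pad
  split <;> simp

/-- ℕ-version of `A1`'s entries. -/
def b1n (M : ℕ) : ℕ → ℕ → ℝ := fun p q =>
  if p = q then (if p + 1 ≤ M then 1 else 0)
  else if (p + 1 = q ∧ Even (p + 1) ∧ q + 1 ≤ M) ∨
          (q + 1 = p ∧ Even (q + 1) ∧ p + 1 ≤ M) then -1
  else 0

/-- ℕ-version of `A2`'s entries. -/
def b2n (M : ℕ) : ℕ → ℕ → ℝ := fun p q =>
  if p = q then (if p + 1 ≤ M then 1 else 0)
  else if (p + 1 = q ∧ Odd (p + 1) ∧ q + 1 ≤ M) ∨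
          (q + 1 = p ∧ Odd (q + 1) ∧ p + 1 ≤ M) then -1
  else 0

lemma A1_entry (d M : ℕ) (i j : Fin d) : A1 d M i j = b1n M i j := by
  simp only [A1, b1n, Fin.ext_iff]

lemma A2_entry (d M : ℕ) (i j : Fin d) : A2 d M i j = b2n M i j := by
  simp only [A2, b2n, Fin.ext_iff]

lemma b1n_decomp (k p q : ℕ) (hp : p < k) (hq : q < k) (u : ℕ → ℝ) :
    b1n (2*k+1) p q * u q =
      (if q = p then u q else 0) + (if q = p + 1 ∧ Odd p then -u q else 0)
        + (if q + 1 = p ∧ (Even p ∧ p ≠ 0) then -u q else 0) := by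
  simp only [b1n, Nat.even_iff, Nat.odd_iff]
  split_ifs <;> first | ring1 | (exfalso; omega)

lemma b2n_decomp (k p q : ℕ) (hp : p < k) (hq : q < k) (u : ℕ → ℝ) :
    b2n (2*k+1) p q * u q =
      (if q = p then u q else 0) + (if q = p + 1 ∧ Even p then -u q else 0)
        + (if q + 1 = p ∧ Odd p then -u q else 0) := by
  simp only [b2n, Nat.even_iff, Nat.odd_iff]
  split_ifs <;> first | ring1 | (exfalso; omega)

lemma sum_range_shrink (d k : ℕ) (hkd : k ≤ d) (F : ℕ → ℝ) (hF : ∀ n, k ≤ n → F n = 0) :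
    ∑ p ∈ range d, F p = ∑ p ∈ range k, F p :=
  (Finset.sum_subset (Finset.range_subset_range.2 hkd)
    (fun p _ hnp => hF p (le_of_not_gt (by simpa using hnp)))).symm

/-- terms of the quadratic form of A1 -/
noncomputable def q1f (u : ℕ → ℝ) (p : ℕ) : ℝ :=
  u p * u p - (if Odd p then u p * u (p+1) else 0)
    - (if Even p ∧ p ≠ 0 then u p * u (p-1) else 0)

/-- terms of the quadratic form of A2 -/
noncomputable def q2f (v : ℕ → ℝ) (p : ℕ) : ℝ :=
  v p * v p - (if Even p then v p * v (p+1) else 0)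
    - (if Odd p then v p * v (p-1) else 0)

lemma A1_quad (d k : ℕ) (hkd : 2*k+1 ≤ d) (x : Fin d → ℝ)
    (hx : ∀ n, k ≤ n → pad d x n = 0) :
    x ⬝ᵥ (A1 d (2*k+1)).mulVec x = ∑ p ∈ range k, q1f (pad d x) p := by
  set u := pad d x with hu
  have hkd' : k ≤ d := by omega
  have hpadx : ∀ i : Fin d, x i = u (i : ℕ) := fun i => (pad_apply d x i).symm
  have hinner : ∀ p, p < k → (∑ q ∈ range d, b1n (2*k+1) p q * u q)
      = u p + (if Odd p then -u (p+1) else 0) + (if Even p ∧ p ≠ 0 then -u (p-1) else 0) := by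
    intro p hp
    rw [sum_range_shrink d k hkd' _ (fun n hn => by rw [hx n hn, mul_zero])]
    rw [Finset.sum_congr rfl (fun q hq => b1n_decomp k p q hp (Finset.mem_range.mp hq) u)]
    rw [Finset.sum_add_distrib, Finset.sum_add_distrib]
    have e1' : ∑ q ∈ range k, (if q = p then u q else 0) = u p := by
      rw [Finset.sum_ite_eq' (range k) p u, if_pos (Finset.mem_range.mpr hp)]
    have e2' : ∑ q ∈ range k, (if q = p + 1 ∧ Odd p then -u q else 0)
        = (if Odd p then -u (p+1) else 0) := by
      by_cases hO : Odd p
      · simp only [hO, and_true, if_true]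
        rw [Finset.sum_ite_eq' (range k) (p+1) (fun q => -u q)]
        by_cases hpk : p + 1 < k
        · rw [if_pos (Finset.mem_range.mpr hpk)]
        · rw [if_neg (by simpa using hpk), hx (p+1) (by omega), neg_zero]
      · simp [hO]
    have e3' : ∑ q ∈ range k, (if q + 1 = p ∧ (Even p ∧ p ≠ 0) then -u q else 0)
        = (if Even p ∧ p ≠ 0 then -u (p-1) else 0) := by
      by_cases hE : Even p ∧ p ≠ 0
      · have hp1 : 1 ≤ p := Nat.one_le_iff_ne_zero.mpr hE.2
        have hiff : ∀ q : ℕ, (q + 1 = p ∧ (Even p ∧ p ≠ 0)) ↔ q = p - 1 := by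
          intro q
          constructor
          · rintro ⟨h, _⟩; omega
          · intro h; exact ⟨by omega, hE⟩
        rw [Finset.sum_congr rfl (fun q _ => if_congr (hiff q) rfl rfl)]
        rw [Finset.sum_ite_eq' (range k) (p-1) (fun q => -u q),
          if_pos (Finset.mem_range.mpr (by omega)), if_pos hE]
      · simp [hE]
    rw [e1', e2', e3']
  have step1 : x ⬝ᵥ (A1 d (2*k+1)).mulVec x
      = ∑ p ∈ range d, u p * (∑ q ∈ range d, b1n (2*k+1) p q * u q) := by
    simp only [dotProduct, mulVec]
    rw [← Fin.sum_univ_eq_sum_range (fun n => u n * ∑ q ∈ range d, b1n (2*k+1) n q * u q) d]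
    refine Finset.sum_congr rfl fun i _ => ?_
    have hrow : ∑ j : Fin d, A1 d (2*k+1) i j * x j
        = ∑ q ∈ range d, b1n (2*k+1) (i : ℕ) q * u q := by
      rw [← Fin.sum_univ_eq_sum_range (fun q => b1n (2*k+1) (i : ℕ) q * u q) d]
      exact Finset.sum_congr rfl fun j _ => by rw [A1_entry, hpadx j]
    rw [hpadx i, ← hrow]
  rw [step1,
    sum_range_shrink d k hkd' _ (fun n hn => by rw [hx n hn, zero_mul])]
  refine Finset.sum_congr rfl fun p hp => ?_
  rw [hinner p (Finset.mem_range.mp hp)]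
  unfold q1f
  split_ifs <;> ring

lemma A2_quad (d k : ℕ) (hkd : 2*k+1 ≤ d) (x : Fin d → ℝ)
    (hx : ∀ n, k ≤ n → pad d x n = 0) :
    x ⬝ᵥ (A2 d (2*k+1)).mulVec x = ∑ p ∈ range k, q2f (pad d x) p := by
  set u := pad d x with hu
  have hkd' : k ≤ d := by omega
  have hpadx : ∀ i : Fin d, x i = u (i : ℕ) := fun i => (pad_apply d x i).symm
  have hinner : ∀ p, p < k → (∑ q ∈ range d, b2n (2*k+1) p q * u q)
      = u p + (if Even p then -u (p+1) else 0) + (if Odd p then -u (p-1) else 0) := by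
    intro p hp
    rw [sum_range_shrink d k hkd' _ (fun n hn => by rw [hx n hn, mul_zero])]
    rw [Finset.sum_congr rfl (fun q hq => b2n_decomp k p q hp (Finset.mem_range.mp hq) u)]
    rw [Finset.sum_add_distrib, Finset.sum_add_distrib]
    have e1' : ∑ q ∈ range k, (if q = p then u q else 0) = u p := by
      rw [Finset.sum_ite_eq' (range k) p u, if_pos (Finset.mem_range.mpr hp)]
    have e2' : ∑ q ∈ range k, (if q = p + 1 ∧ Even p then -u q else 0)
        = (if Even p then -u (p+1) else 0) := by
      by_cases hE : Even p
      · simp only [hE, and_true, if_true]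
        rw [Finset.sum_ite_eq' (range k) (p+1) (fun q => -u q)]
        by_cases hpk : p + 1 < k
        · rw [if_pos (Finset.mem_range.mpr hpk)]
        · rw [if_neg (by simpa using hpk), hx (p+1) (by omega), neg_zero]
      · simp [hE]
    have e3' : ∑ q ∈ range k, (if q + 1 = p ∧ Odd p then -u q else 0)
        = (if Odd p then -u (p-1) else 0) := by
      by_cases hO : Odd p
      · have hp1 : 1 ≤ p := Nat.one_le_iff_ne_zero.mpr (by rintro rfl; simp at hO)
        have hiff : ∀ q : ℕ, (q + 1 = p ∧ Odd p) ↔ q = p - 1 := by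
          intro q
          constructor
          · rintro ⟨h, _⟩; omega
          · intro h; exact ⟨by omega, hO⟩
        rw [Finset.sum_congr rfl (fun q _ => if_congr (hiff q) rfl rfl)]
        rw [Finset.sum_ite_eq' (range k) (p-1) (fun q => -u q),
          if_pos (Finset.mem_range.mpr (by omega)), if_pos hO]
      · simp [hO]
    rw [e1', e2', e3']
  have step1 : x ⬝ᵥ (A2 d (2*k+1)).mulVec x
      = ∑ p ∈ range d, u p * (∑ q ∈ range d, b2n (2*k+1) p q * u q) := by
    simp only [dotProduct, mulVec]
    rw [← Fin.sum_univ_eq_sum_range (fun n => u n * ∑ q ∈ range d, b2n (2*k+1) n q * u q) d]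
    refine Finset.sum_congr rfl fun i _ => ?_
    have hrow : ∑ j : Fin d, A2 d (2*k+1) i j * x j
        = ∑ q ∈ range d, b2n (2*k+1) (i : ℕ) q * u q := by
      rw [← Fin.sum_univ_eq_sum_range (fun q => b2n (2*k+1) (i : ℕ) q * u q) d]
      exact Finset.sum_congr rfl fun j _ => by rw [A2_entry, hpadx j]
    rw [hpadx i, ← hrow]
  rw [step1,
    sum_range_shrink d k hkd' _ (fun n hn => by rw [hx n hn, zero_mul])]
  refine Finset.sum_congr rfl fun p hp => ?_
  rw [hinner p (Finset.mem_range.mp hp)]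
  unfold q2f
  split_ifs <;> ring

lemma e1_dot (d : ℕ) (hd : 0 < d) (x : Fin d → ℝ) : e1 d ⬝ᵥ x = pad d x 0 := by
  simp only [dotProduct, e1]
  have h1 : ∑ i : Fin d, (if (i : ℕ) = 0 then (1:ℝ) else 0) * x i
      = ∑ n ∈ range d, (if n = 0 then pad d x n else 0) := by
    rw [← Fin.sum_univ_eq_sum_range (fun n => if n = 0 then pad d x n else 0) d]
    refine Finset.sum_congr rfl fun i _ => ?_
    rw [pad_apply]
    split_ifs <;> ring
  rw [h1, Finset.sum_ite_eq' (range d) 0 (pad d x),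
    if_pos (Finset.mem_range.mpr hd)]

lemma avec_dot (d k M : ℕ) (hkd : k ≤ d) (hkM : k ≤ M) (y : Fin d → ℝ)
    (hy : ∀ n, k ≤ n → pad d y n = 0) :
    avec d M ⬝ᵥ y = ∑ p ∈ range k, (-1:ℝ)^p * pad d y p := by
  simp only [dotProduct, avec]
  have h1 : ∑ i : Fin d, (if (i : ℕ) < M then (-1:ℝ)^(i:ℕ) else 0) * y i
      = ∑ n ∈ range d, (if n < M then (-1:ℝ)^n else 0) * pad d y n := by
    rw [← Fin.sum_univ_eq_sum_range (fun n => (if n < M then (-1:ℝ)^n else 0) * pad d y n) d]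
    exact Finset.sum_congr rfl fun i _ => by rw [pad_apply]
  rw [h1, sum_range_shrink d k hkd _ (fun n hn => by rw [hy n hn, mul_zero])]
  exact Finset.sum_congr rfl fun p hp =>
    by rw [if_pos (lt_of_lt_of_le (Finset.mem_range.mp hp) hkM)]

/-- per-index terms of the lower-bound decomposition, first block. -/
noncomputable def S1f (c : ℝ) (u : ℕ → ℝ) (p : ℕ) : ℝ :=
  q1f u p + c * (-1)^p * u p - (if p = 0 then 2 * u 0 else 0)

noncomputable def S2f (c : ℝ) (v : ℕ → ℝ) (p : ℕ) : ℝ :=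
  q2f v p - c * (-1)^p * v p

lemma pair_bound (T : ℕ → ℝ) (B : ℝ) (h : ∀ j, -B ≤ T (2*j) + T (2*j+1)) :
    ∀ m : ℕ, -((m:ℝ)*B) ≤ ∑ p ∈ range (2*m), T p := by
  intro m
  induction m with
  | zero => simp
  | succ n ih =>
      have := h n
      rw [show 2*(n+1) = 2*n+1+1 by ring, sum_range_succ, sum_range_succ]
      push_cast
      push_cast at ih
      linarith

lemma pairS1 (c : ℝ) (u : ℕ → ℝ) (j : ℕ) :
    -(c^2/4) ≤ S1f c u (2*j+1) + S1f c u (2*j+1+1) := by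
  have h1 : Odd (2*j+1) := ⟨j, by ring⟩
  have h2 : ¬ Odd (2*j+1+1) := by rw [Nat.odd_iff]; omega
  have h3 : Even (2*j+1+1) ∧ 2*j+1+1 ≠ 0 := ⟨by rw [Nat.even_iff]; omega, by omega⟩
  have h4 : ¬ (Even (2*j+1) ∧ 2*j+1 ≠ 0) := by
    rintro ⟨h, -⟩; rw [Nat.even_iff] at h; omega
  have h5 : ¬ (2*j+1 = 0) := by omega
  have h6 : ¬ (2*j+1+1 = 0) := by omega
  have e' : 2*j+1+1-1 = 2*j+1 := by omega
  have p1 : (-1:ℝ)^(2*j+1) = -1 := by rw [pow_succ, pow_mul]; norm_num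
  have p2 : (-1:ℝ)^(2*j+1+1) = 1 := by rw [pow_succ, p1]; norm_num
  simp only [S1f, q1f, if_pos h1, if_neg h2, if_pos h3, if_neg h4, if_neg h5, if_neg h6,
    e', p1, p2]
  nlinarith [sq_nonneg (u (2*j+1) - u (2*j+1+1) - c/2)]

lemma pairS2 (c : ℝ) (v : ℕ → ℝ) (j : ℕ) :
    -(c^2/4) ≤ S2f c v (2*j) + S2f c v (2*j+1) := by
  have h1 : Even (2*j) := ⟨j, by ring⟩
  have h2 : ¬ Odd (2*j) := by rw [Nat.odd_iff]; omega
  have h3 : Odd (2*j+1) := ⟨j, by ring⟩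
  have h4 : ¬ Even (2*j+1) := by rw [Nat.even_iff]; omega
  have e' : 2*j+1-1 = 2*j := by omega
  have p1 : (-1:ℝ)^(2*j) = 1 := by rw [pow_mul]; norm_num
  have p2 : (-1:ℝ)^(2*j+1) = -1 := by rw [pow_succ, p1]; norm_num
  simp only [S2f, q2f, if_pos h1, if_neg h2, if_pos h3, if_neg h4, e', p1, p2]
  nlinarith [sq_nonneg (v (2*j) - v (2*j+1) - c/2)]

lemma strayS1 (c : ℝ) (u : ℕ → ℝ) (j : ℕ) (h : u (2*j+1+1) = 0) :
    -(c^2/4) ≤ S1f c u (2*j+1) := by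
  have h1 : Odd (2*j+1) := ⟨j, by ring⟩
  have h4 : ¬ (Even (2*j+1) ∧ 2*j+1 ≠ 0) := by
    rintro ⟨hh, -⟩; rw [Nat.even_iff] at hh; omega
  have h5 : ¬ (2*j+1 = 0) := by omega
  have p1 : (-1:ℝ)^(2*j+1) = -1 := by rw [pow_succ, pow_mul]; norm_num
  simp only [S1f, q1f, if_pos h1, if_neg h4, if_neg h5, p1, h]
  nlinarith [sq_nonneg (u (2*j+1) - c/2)]

lemma strayS2 (c : ℝ) (v : ℕ → ℝ) (j : ℕ) (h : v (2*j+1) = 0) :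
    -(c^2/4) ≤ S2f c v (2*j) := by
  have h1 : Even (2*j) := ⟨j, by ring⟩
  have h2 : ¬ Odd (2*j) := by rw [Nat.odd_iff]; omega
  have p1 : (-1:ℝ)^(2*j) = 1 := by rw [pow_mul]; norm_num
  simp only [S2f, q2f, if_pos h1, if_neg h2, p1, h]
  nlinarith [sq_nonneg (v (2*j) - c/2)]

lemma headS1 (c : ℝ) (u : ℕ → ℝ) : -((1-c/2)^2) ≤ S1f c u 0 := by
  have h1 : ¬ Odd 0 := by rw [Nat.odd_iff]; omega
  have h2 : ¬ (Even 0 ∧ (0:ℕ) ≠ 0) := by rintro ⟨-, hh⟩; omega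
  simp only [S1f, q1f, if_pos rfl, if_neg h1, if_neg h2, pow_zero, if_true,
    eq_self_iff_true]
  nlinarith [sq_nonneg (u 0 - 1 + c/2)]

lemma total_bound (c : ℝ) (k : ℕ) (hk : 1 ≤ k) (u v : ℕ → ℝ)
    (hus : ∀ n, k ≤ n → u n = 0) (hvs : ∀ n, k ≤ n → v n = 0) :
    -((1-c/2)^2) - (k:ℝ) * (c^2/4)
      ≤ (∑ p ∈ range k, S1f c u p) + (∑ p ∈ range k, S2f c v p) := by
  obtain ⟨j, hj | hj⟩ := Nat.even_or_odd' k
  · -- k = 2*j with j ≥ 1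
    obtain ⟨i, rfl⟩ : ∃ i, j = i + 1 := ⟨j - 1, by omega⟩
    subst hj
    have hS1 : -((1-c/2)^2) - ((i:ℝ)+1) * (c^2/4) ≤ ∑ p ∈ range (2*(i+1)), S1f c u p := by
      rw [show 2*(i+1) = (2*i+1)+1 by ring, Finset.sum_range_succ', Finset.sum_range_succ]
      have hp := pair_bound (fun p => S1f c u (p+1)) (c^2/4) (fun j' => pairS1 c u j') i
      have hstray := strayS1 c u i (hus _ (by omega))
      have hhead := headS1 c u
      push_cast at hp ⊢
      linarith
    have hS2 : -((i:ℝ)+1) * (c^2/4) ≤ ∑ p ∈ range (2*(i+1)), S2f c v p := by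
      have hp := pair_bound (fun p => S2f c v p) (c^2/4) (fun j' => pairS2 c v j') (i+1)
      push_cast at hp ⊢
      linarith
    push_cast
    linarith
  · -- k = 2*j + 1
    subst hj
    have hS1 : -((1-c/2)^2) - (j:ℝ) * (c^2/4) ≤ ∑ p ∈ range (2*j+1), S1f c u p := by
      rw [Finset.sum_range_succ']
      have hp := pair_bound (fun p => S1f c u (p+1)) (c^2/4) (fun j' => pairS1 c u j') j
      have hhead := headS1 c u
      linarith
    have hS2 : -(((j:ℝ)+1) * (c^2/4)) ≤ ∑ p ∈ range (2*j+1), S2f c v p := by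
      rw [Finset.sum_range_succ]
      have hp := pair_bound (fun p => S2f c v p) (c^2/4) (fun j' => pairS2 c v j') j
      have hstray := strayS2 c v j (hvs _ (by omega))
      linarith
    push_cast
    linarith

/-- any point of ℝ^{k,d} × ℝ^{k,d} is at least L/(32(k+1)) above
the global minimum −(L/8)(2k+1)/(2k+2) of f_{[2k+1]}. -/
theorem stmt_7 (d : ℕ) (L : ℝ) (hL : 0 < L) (k : ℕ)
    (hk : 1 ≤ k) (hkd : 2 * k + 1 ≤ d)
    (x1 : Fin d → ℝ) (hx1 : x1 ∈ Rj d k)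
    (x2 : Fin d → ℝ) (hx2 : x2 ∈ Rj d k) :
    -(L / 8) * ((2 * (k : ℝ) + 1) / (2 * (k : ℝ) + 2)) + L / (32 * ((k : ℝ) + 1))
      ≤ fk d L (2 * k + 1) x1 x2 := by
  have hd0 : 0 < d := by omega
  have hkd' : k ≤ d := by omega
  have hus := pad_supp d k x1 hx1
  have hvs := pad_supp d k x2 hx2
  set c : ℝ := 1 / ((k:ℝ)+1) with hc
  have hk1 : (1:ℝ) ≤ (k:ℝ) := by exact_mod_cast hk
  have hK : (0:ℝ) < (k:ℝ) + 1 := by linarith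
  have hQ1 := A1_quad d k hkd x1 hus
  have hQ2 := A2_quad d k hkd x2 hvs
  have hE := e1_dot d hd0 x1
  have hA : avec d (2*k+1) ⬝ᵥ (x1 - x2)
      = ∑ p ∈ range k, (-1:ℝ)^p * (pad d x1 p - pad d x2 p) := by
    rw [avec_dot d k (2*k+1) hkd' (by omega) (x1 - x2)
      (fun n hn => by rw [pad_sub, hus n hn, hvs n hn, sub_zero])]
    exact Finset.sum_congr rfl fun p _ => by rw [pad_sub]
  have hcoef : L / (4 * (((2*k+1 : ℕ) : ℝ) + 1)) = L / 8 * c := by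
    rw [hc, mul_one_div, div_div]
    congr 1
    push_cast
    ring
  have h0 : (∑ p ∈ range k, (if p = 0 then 2 * pad d x1 0 else 0)) = 2 * pad d x1 0 := by
    rw [Finset.sum_ite_eq' (range k) 0 (fun _ => 2 * pad d x1 0),
      if_pos (Finset.mem_range.mpr (by omega))]
  have hcomb : (∑ p ∈ range k, S1f c (pad d x1) p) + (∑ p ∈ range k, S2f c (pad d x2) p)
      = ((∑ p ∈ range k, q1f (pad d x1) p) + (∑ p ∈ range k, q2f (pad d x2) p)
        + c * (∑ p ∈ range k, (-1:ℝ)^p * (pad d x1 p - pad d x2 p))) - 2 * pad d x1 0 := by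
    calc (∑ p ∈ range k, S1f c (pad d x1) p) + (∑ p ∈ range k, S2f c (pad d x2) p)
        = ∑ p ∈ range k, (S1f c (pad d x1) p + S2f c (pad d x2) p) :=
          Finset.sum_add_distrib.symm
      _ = ∑ p ∈ range k, ((q1f (pad d x1) p + q2f (pad d x2) p
            + c * ((-1:ℝ)^p * (pad d x1 p - pad d x2 p)))
            - (if p = 0 then 2 * pad d x1 0 else 0)) :=
          Finset.sum_congr rfl fun p _ => by unfold S1f S2f; ring
      _ = _ := by
          rw [Finset.sum_sub_distrib, h0, Finset.sum_add_distrib, Finset.sum_add_distrib,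
            ← Finset.mul_sum]
  have hsplit : fk d L (2*k+1) x1 x2
      = L/8 * ((∑ p ∈ range k, S1f c (pad d x1) p) + (∑ p ∈ range k, S2f c (pad d x2) p)) := by
    unfold fk
    rw [hQ1, hQ2, hE, hA, hcoef, hcomb]
    ring
  have hbound := total_bound c k hk (pad d x1) (pad d x2) hus hvs
  have hfinal : -(L / 8) * ((2*(k:ℝ)+1)/(2*(k:ℝ)+2)) + L / (32 * ((k:ℝ)+1))
      = L/8 * (-((1-c/2)^2) - (k:ℝ) * (c^2/4)) := by
    rw [hc]
    have h1 : (k:ℝ) + 1 ≠ 0 := by linarith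
    have h2 : 2*(k:ℝ) + 2 ≠ 0 := by linarith
    field_simp
    ring
  rw [hsplit, hfinal]
  have hL8 : (0:ℝ) ≤ L/8 := by linarith
  exact mul_le_mul_of_nonneg_left hbound hL8
end

section
/- (Consensus-error and objective-error extraction) Let m ≥ 2, let J = (1/m) 1_m 1_mᵀ ∈ ℝ^{m×m}, let f : ℝ^{m×d} → ℝ be any function, let u, x* ∈ ℝ^{m×d}, let y* ∈ C^⊥ with y* ≠ 0, and let B̄ ∈ ℝ. Suppose (i) f(u) − f(x*) + ⟨y, u⟩ ≤ B̄ for every y ∈ C^⊥ with ‖y‖ = 2‖y*‖, and (ii) f(u) − f(x*) + ⟨y*, u⟩ ≥ 0. Then ‖(I − J)u‖ ≤ B̄/‖y*‖ and |f(u) − f(x*)| ≤ B̄. -/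
/-- Frobenius norm. -/
noncomputable def nrm {m d : ℕ} (x : Matrix (Fin m) (Fin d) ℝ) : ℝ :=
  Real.sqrt (ip x x)

/-- The orthogonal complement C^⊥ = {y : 1ₘᵀ y = 0}. -/
def cPerp (m d : ℕ) : Set (Matrix (Fin m) (Fin d) ℝ) :=
  {y | ∀ j, ∑ i, y i j = 0}

/-- The averaging matrix J = (1/m) 1ₘ 1ₘᵀ. -/
noncomputable def Jmat (m : ℕ) : Matrix (Fin m) (Fin m) ℝ :=
  fun _ _ => 1 / (m : ℝ)

section ExtractionInInnerProductSpace

open scoped InnerProductSpace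

variable {E : Type*} [NormedAddCommGroup E] [InnerProductSpace ℝ E] {K : Submodule ℝ E}
  {u ys : E} {F B : ℝ}

theorem abs_le_of_forall_norm_eq_two_mul_norm (hys : ys ∈ K)
    (h1 : ∀ y ∈ K, ‖y‖ = 2 * ‖ys‖ → F + ⟪y, u⟫_ℝ ≤ B) (h2 : 0 ≤ F + ⟪ys, u⟫_ℝ) :
    |F| ≤ B := by
  have hplus := h1 ((2 : ℝ) • ys) (K.smul_mem _ hys) (by rw [norm_smul]; norm_num)
  have hminus := h1 ((-2 : ℝ) • ys) (K.smul_mem _ hys) (by rw [norm_smul]; norm_num)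
  rw [real_inner_smul_left] at hplus hminus
  rw [abs_le]
  constructor <;> linarith

theorem inner_starProjection_eq_of_mem [K.HasOrthogonalProjection] {y : E} (hy : y ∈ K) (v : E) :
    ⟪y, K.starProjection v⟫_ℝ = ⟪y, v⟫_ℝ := by
  rw [← K.inner_starProjection_left_eq_right, K.starProjection_eq_self_iff.2 hy]

theorem norm_mul_norm_starProjection_le [K.HasOrthogonalProjection] (hys : ys ∈ K)
    (h1 : ∀ y ∈ K, ‖y‖ = 2 * ‖ys‖ → F + ⟪y, u⟫_ℝ ≤ B) (h2 : 0 ≤ F + ⟪ys, u⟫_ℝ) :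
    ‖ys‖ * ‖K.starProjection u‖ ≤ B := by
  set w := K.starProjection u
  have hw : w ∈ K := K.starProjection_apply_mem u
  rcases eq_or_ne w 0 with hw0 | hw0
  · rw [hw0, norm_zero, mul_zero]
    exact (abs_nonneg F).trans (abs_le_of_forall_norm_eq_two_mul_norm hys h1 h2)
  have hwpos : 0 < ‖w‖ := norm_pos_iff.2 hw0
  set c := 2 * ‖ys‖ / ‖w‖
  have hcw : c • w ∈ K := K.smul_mem c hw
  have htest := h1 (c • w) hcw (by
    rw [norm_smul, Real.norm_of_nonneg (by positivity), div_mul_cancel₀ _ hwpos.ne'])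
  rw [← inner_starProjection_eq_of_mem hcw, real_inner_smul_left,
    real_inner_self_eq_norm_sq] at htest
  have hc : c * ‖w‖ ^ 2 = 2 * (‖ys‖ * ‖w‖) := by
    simp only [c]
    field_simp
  have hcs : ⟪ys, u⟫_ℝ ≤ ‖ys‖ * ‖w‖ :=
    inner_starProjection_eq_of_mem hys u ▸ real_inner_le_norm ys w
  linarith

end ExtractionInInnerProductSpace

def cPerpSubmodule (m d : ℕ) : Submodule ℝ (Matrix (Fin m) (Fin d) ℝ) where
  carrier := cPerp m d
  add_mem' {x y} hx hy j := by
    simp only [Matrix.add_apply, Finset.sum_add_distrib, hx j, hy j, add_zero]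
  zero_mem' _ := by simp
  smul_mem' c x hx j := by
    simp only [Matrix.smul_apply, smul_eq_mul, ← Finset.mul_sum, hx j, mul_zero]

def flatten (ι κ : Type*) [Fintype ι] [Fintype κ] :
    Matrix ι κ ℝ ≃ₗ[ℝ] EuclideanSpace ℝ (ι × κ) where
  toFun x := WithLp.toLp 2 (Function.uncurry x)
  invFun v := Matrix.of (Function.curry v.ofLp)
  map_add' _ _ := rfl
  map_smul' _ _ := rfl
  left_inv _ := rfl
  right_inv _ := rfl

@[simp]
theorem flatten_apply {ι κ : Type*} [Fintype ι] [Fintype κ] (x : Matrix ι κ ℝ) (i : ι) (j : κ) :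
    flatten ι κ x (i, j) = x i j :=
  rfl

theorem inner_flatten {m d : ℕ} (x y : Matrix (Fin m) (Fin d) ℝ) :
    inner ℝ (flatten _ _ x) (flatten _ _ y) = ip x y := by
  simp [ip, PiLp.inner_apply, Fintype.sum_prod_type, mul_comm]

theorem norm_flatten {m d : ℕ} (x : Matrix (Fin m) (Fin d) ℝ) : ‖flatten _ _ x‖ = nrm x := by
  rw [norm_eq_sqrt_real_inner, inner_flatten, nrm]

theorem Jmat_mul_apply {m d : ℕ} (u : Matrix (Fin m) (Fin d) ℝ) (i : Fin m) (j : Fin d) :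
    (Jmat m * u) i j = (1 / m) * ∑ k, u k j := by
  simp only [Matrix.mul_apply, Jmat, Finset.mul_sum]

theorem sum_Jmat_mul_apply {m d : ℕ} (u : Matrix (Fin m) (Fin d) ℝ) (j : Fin d) :
    ∑ i, (Jmat m * u) i j = ∑ i, u i j := by
  rcases m.eq_zero_or_pos with rfl | hm
  · simp
  · simp only [Jmat_mul_apply, Finset.sum_const, Finset.card_univ, Fintype.card_fin, nsmul_eq_mul]
    field_simp

theorem ip_Jmat_mul_eq_zero {m d : ℕ} {y : Matrix (Fin m) (Fin d) ℝ} (hy : y ∈ cPerp m d)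
    (u : Matrix (Fin m) (Fin d) ℝ) : ip y (Jmat m * u) = 0 := by
  simp only [ip, Jmat_mul_apply]
  rw [Finset.sum_comm]
  exact Finset.sum_eq_zero fun j _ => by rw [← Finset.sum_mul, hy j, zero_mul]

theorem one_sub_Jmat_mul_mem_cPerp {m d : ℕ} (u : Matrix (Fin m) (Fin d) ℝ) :
    (1 - Jmat m) * u ∈ cPerp m d := by
  intro j
  simp only [Matrix.sub_mul, Matrix.one_mul, Matrix.sub_apply, Finset.sum_sub_distrib,
    sum_Jmat_mul_apply, sub_self]

theorem flatten_one_sub_Jmat_mul {m d : ℕ} (u : Matrix (Fin m) (Fin d) ℝ) :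
    flatten _ _ ((1 - Jmat m) * u) =
      ((cPerpSubmodule m d).map (flatten (Fin m) (Fin d)).toLinearMap).starProjection
        (flatten _ _ u) := by
  refine (Submodule.eq_starProjection_of_mem_of_inner_eq_zero
    (Submodule.mem_map_of_mem (one_sub_Jmat_mul_mem_cPerp u)) ?_).symm
  rintro _ ⟨y, hy, rfl⟩
  rw [LinearEquiv.coe_coe, ← map_sub, Matrix.sub_mul, Matrix.one_mul, sub_sub_cancel,
    real_inner_comm]
  exact (inner_flatten y _).trans (ip_Jmat_mul_eq_zero hy u)

theorem stmt_14_general {m d : ℕ}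
    (f : Matrix (Fin m) (Fin d) ℝ → ℝ)
    (u xs ys : Matrix (Fin m) (Fin d) ℝ)
    (hys : ys ∈ cPerp m d) (hys0 : ys ≠ 0) (Bbar : ℝ)
    (h1 : ∀ y ∈ cPerp m d, nrm y = 2 * nrm ys → f u - f xs + ip y u ≤ Bbar)
    (h2 : 0 ≤ f u - f xs + ip ys u) :
    nrm (((1 : Matrix (Fin m) (Fin m) ℝ) - Jmat m) * u) ≤ Bbar / nrm ys ∧
      |f u - f xs| ≤ Bbar := by
  set e := flatten (Fin m) (Fin d)
  set K := (cPerpSubmodule m d).map e.toLinearMap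
  have hys' : e ys ∈ K := Submodule.mem_map_of_mem hys
  have h1' : ∀ y ∈ K, ‖y‖ = 2 * ‖e ys‖ → f u - f xs + inner ℝ y (e u) ≤ Bbar := by
    rintro _ ⟨y, hy, rfl⟩
    rw [LinearEquiv.coe_coe, norm_flatten, norm_flatten, inner_flatten]
    exact h1 y hy
  have h2' : 0 ≤ f u - f xs + inner ℝ (e ys) (e u) := by rwa [inner_flatten]
  have hys_pos : 0 < nrm ys := by
    rw [← norm_flatten]
    exact norm_pos_iff.2 (e.map_ne_zero_iff.2 hys0)
  refine ⟨?_, abs_le_of_forall_norm_eq_two_mul_norm hys' h1' h2'⟩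
  rw [le_div_iff₀ hys_pos, mul_comm, ← norm_flatten, ← norm_flatten, flatten_one_sub_Jmat_mul]
  exact norm_mul_norm_starProjection_le hys' h1' h2'

/-- consensus-error and objective-error extraction. -/
theorem stmt_14 {m d : ℕ} (hm : 2 ≤ m)
    (f : Matrix (Fin m) (Fin d) ℝ → ℝ)
    (u xs ys : Matrix (Fin m) (Fin d) ℝ)
    (hys : ys ∈ cPerp m d) (hys0 : ys ≠ 0) (Bbar : ℝ)
    (h1 : ∀ y ∈ cPerp m d, nrm y = 2 * nrm ys → f u - f xs + ip y u ≤ Bbar)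
    (h2 : 0 ≤ f u - f xs + ip ys u) :
    nrm (((1 : Matrix (Fin m) (Fin m) ℝ) - Jmat m) * u) ≤ Bbar / nrm ys ∧
      |f u - f xs| ≤ Bbar :=
  stmt_14_general f u xs ys hys hys0 Bbar h1 h2
end
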